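/- Let G=(V,E) be a mixed graph and A, B, C disjoint subsets of V. Then A ⊥_m B | C in G if and only if there exist disjoint subsets A* and B* with A ⊆ A*, B ⊆ B*, A* ∪ B* ∪ C = an(A∪B∪C), and district_{G*}(A* ∪ ch_{G*}(A*)) ∩ district_{G*}(B* ∪ ch_{G*}(B*)) = ∅, where G* is the subgraph of G induced by an(A∪B∪C). -/

import Mathlib

structure MixedGraph (V : Type*) where
  dir : V → V → Prop
  bi : V → V → Prop
  bi_symm : ∀ {a b : V}, bi a b → bi b a

namespace MixedGraph

variable {V : Type*}

/-- A single edge traversal: a directed edge traversed forwards (`a → b`),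
a directed edge traversed backwards (`a ← b`), or a bi-directed edge (`a ↔ b`). -/
inductive Step (G : MixedGraph V) : V → V → Type _
  | fwd {a b : V} : G.dir a b → G.Step a b
  | bwd {a b : V} : G.dir b a → G.Step a b
  | bi  {a b : V} : G.bi a b → G.Step a b

/-- The edge has an arrowhead at its second endpoint. -/
def Step.arrowAtEnd {G : MixedGraph V} : {a b : V} → G.Step a b → Prop
  | _, _, .fwd _ => True
  | _, _, .bwd _ => False
  | _, _, .bi _ => True

/-- The edge has an arrowhead at its first endpoint. -/
def Step.arrowAtStart {G : MixedGraph V} : {a b : V} → G.Step a b → Prop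
  | _, _, .fwd _ => False
  | _, _, .bwd _ => True
  | _, _, .bi _ => True

/-- Paths (possibly self-intersecting) in a mixed graph. -/
inductive Walk (G : MixedGraph V) : V → V → Type _
  | nil {a : V} : G.Walk a a
  | cons {a b c : V} : G.Step a b → G.Walk b c → G.Walk a c

namespace Walk

variable {G : MixedGraph V}

def length : {a b : V} → G.Walk a b → ℕ
  | _, _, .nil => 0
  | _, _, .cons _ w => w.length + 1

def verts : {a b : V} → G.Walk a b → List V
  | a, _, .nil => [a]
  | a, _, .cons _ w => a :: w.verts

/-- The intermediate vertices of a walk. -/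
def interm {a b : V} (w : G.Walk a b) : List V := w.verts.tail.dropLast

def append : {a b c : V} → G.Walk a b → G.Walk b c → G.Walk a c
  | _, _, _, .nil, w' => w'
  | _, _, _, .cons s w, w' => .cons s (w.append w')

/-- Every intermediate vertex of the walk is a collider. -/
def IsPureCollider : {a b : V} → G.Walk a b → Prop
  | _, _, .nil => True
  | _, _, .cons _ .nil => True
  | _, _, .cons s (.cons t w) =>
      s.arrowAtEnd ∧ t.arrowAtStart ∧ (Walk.cons t w).IsPureCollider

/-- The walk is m-connecting given `C`: every non-collider on it is outside `C`
and every collider on it is in `C`. -/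
def IsMConnecting (C : Set V) : {a b : V} → G.Walk a b → Prop
  | _, _, .nil => True
  | _, _, .cons _ .nil => True
  | _, _, .cons (b := m) s (.cons t w) =>
      ((s.arrowAtEnd ∧ t.arrowAtStart) ↔ m ∈ C) ∧ (Walk.cons t w).IsMConnecting C

end Walk

variable (G : MixedGraph V)

/-- `A` and `B` are m-separated given `C`: no m-connecting walk given `C`
between a vertex of `A` and a vertex of `B`. -/
def MSep (A B C : Set V) : Prop :=
  ∀ a ∈ A, ∀ b ∈ B, ∀ w : G.Walk a b, ¬ w.IsMConnecting C

/-- `u` and `v` are joined by a pure-collider path (with at least one edge). -/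
def ColliderConn (u v : V) : Prop :=
  ∃ w : G.Walk u v, 0 < w.length ∧ w.IsPureCollider

/-- Vertices connected to `S` by a (possibly empty) path of bi-directed edges. -/
def district (S : Set V) : Set V :=
  {v | ∃ s ∈ S, Relation.ReflTransGen G.bi s v}

/-- Children of vertices in `S`. -/
def ch (S : Set V) : Set V := {v | ∃ a ∈ S, G.dir a v}

/-- Ancestors of `S` (including `S` itself). -/
def an (S : Set V) : Set V :=
  {v | ∃ s ∈ S, Relation.ReflTransGen G.dir v s}

/-- The subgraph induced by `W`: edges with both endpoints in `W`. -/
def induce (W : Set V) : MixedGraph V where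
  dir a b := G.dir a b ∧ a ∈ W ∧ b ∈ W
  bi a b := G.bi a b ∧ a ∈ W ∧ b ∈ W
  bi_symm h := ⟨G.bi_symm h.1, h.2.2, h.2.1⟩

/-- Separation in an undirected graph with adjacency `adj`: every path between
`A` and `B` intersects `C`, i.e. `B` is not reachable from `A` avoiding `C`. -/
def UndirSep (adj : V → V → Prop) (A B C : Set V) : Prop :=
  ∀ a ∈ A, ∀ b ∈ B, ¬ Relation.ReflTransGen (fun x y => adj x y ∧ y ∉ C) a b

inductive EdgeKind | fwd | bwd | bi
deriving DecidableEq

def Step.kind {G : MixedGraph V} : {a b : V} → G.Step a b → EdgeKind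
  | _, _, .fwd _ => .fwd
  | _, _, .bwd _ => .bwd
  | _, _, .bi _ => .bi

def Walk.kinds {G : MixedGraph V} : {a b : V} → G.Walk a b → List EdgeKind
  | _, _, .nil => []
  | _, _, .cons s w => s.kind :: w.kinds

end MixedGraph

/-!
If `A ⊥_m B | C`, put into `A*` the vertices of `an(A ∪ B ∪ C) \ C` that are
m-connected to `A`, and the remaining ones outside `C` into `B*`. A vertex of
`an(A ∪ B ∪ C) \ C` reached from `A` can always be reached with a tail: push the walk down a
directed path towards `A ∪ B ∪ C`, bouncing back at the first collider in `C`; it cannot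
arrive at `B`. Hence an m-connecting walk from `A` continues along every bi-directed edge of
`G*` and from `A*` to its children, so the whole district of `A* ∪ ch(A*)` is m-connected
to `A`, while nothing in `B* ∪ ch(B*)` can be.

Conversely, every vertex on an m-connecting walk lies in `an(A ∪ B ∪ C)`, and walking along it
from `A` one never leaves the district of `A* ∪ ch(A*)`: non-colliders lie in `A*` or `B*`
and colliders lie in `C`, so each step is a bi-directed edge, an edge out of `A*`, or an edge
into a vertex of `A*`; the walk ends in `B*`, which lies in the other district.
-/

namespace MixedGraph

variable {V : Type*} {G : MixedGraph V}

section Ancestors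

variable {S T : Set V}

theorem subset_an (S : Set V) : S ⊆ G.an S :=
  fun s hs => ⟨s, hs, .refl⟩

theorem an_subset_of_subset_an (h : S ⊆ G.an T) : G.an S ⊆ G.an T := by
  rintro v ⟨s, hs, hvs⟩
  obtain ⟨t, ht, hst⟩ := h hs
  exact ⟨t, ht, hvs.trans hst⟩

theorem an_mono (h : S ⊆ T) : G.an S ⊆ G.an T :=
  an_subset_of_subset_an (h.trans (subset_an T))

theorem mem_an_of_dir {x y : V} (h : G.dir x y) (hy : y ∈ G.an S) : x ∈ G.an S := by
  obtain ⟨s, hs, hys⟩ := hy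
  exact ⟨s, hs, .head h hys⟩

end Ancestors

section Districts

variable {H : MixedGraph V} {S P : Set V}

theorem subset_district (S : Set V) : S ⊆ H.district S :=
  fun s hs => ⟨s, hs, .refl⟩

theorem district_subset_of_forall_bi (hS : S ⊆ P)
    (hP : ∀ x y, H.bi x y → x ∈ P → y ∈ P) : H.district S ⊆ P := by
  rintro v ⟨s, hs, hsv⟩
  induction hsv with
  | refl => exact hS hs
  | tail _ hbi ih => exact hP _ _ hbi ih

theorem exists_mem_district_singleton {z : V} (hz : z ∈ H.district S) :
    ∃ s ∈ S, s ∈ H.district {z} := by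
  obtain ⟨s, hs, hsz⟩ := hz
  exact ⟨s, hs, z, rfl, Relation.ReflTransGen.mono (fun _ _ => H.bi_symm) _ _
    (Relation.reflTransGen_swap.mpr hsz)⟩

end Districts

namespace Step

variable {a b : V} {s : G.Step a b}

theorem dir_of_not_arrowAtStart (h : ¬ s.arrowAtStart) : G.dir a b := by
  cases s with
  | fwd hd => exact hd
  | bwd _ | bi _ => exact absurd trivial h

theorem arrowAtEnd_of_not_arrowAtStart (h : ¬ s.arrowAtStart) : s.arrowAtEnd := by
  cases s with
  | fwd _ => trivial
  | bwd _ | bi _ => exact absurd trivial h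

theorem dir_of_not_arrowAtEnd (h : ¬ s.arrowAtEnd) : G.dir b a := by
  cases s with
  | bwd hd => exact hd
  | fwd _ | bi _ => exact absurd trivial h

end Step

namespace Walk

variable {C : Set V}

def concat : {a b c : V} → G.Walk a b → G.Step b c → G.Walk a c
  | _, _, _, .nil, s => .cons s .nil
  | _, _, _, .cons t w, s => .cons t (w.concat s)

def EndsWithArrow : {a b : V} → G.Walk a b → Prop
  | _, _, .nil => False
  | _, _, .cons s .nil => s.arrowAtEnd
  | _, _, .cons _ (.cons t w) => (Walk.cons t w).EndsWithArrow

theorem endsWithArrow_concat : ∀ {a b c : V} (w : G.Walk a b) (s : G.Step b c),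
    (w.concat s).EndsWithArrow ↔ s.arrowAtEnd
  | _, _, _, .nil, _ => Iff.rfl
  | _, _, _, .cons _ .nil, _ => Iff.rfl
  | _, _, _, .cons _ (.cons u w), s => endsWithArrow_concat (.cons u w) s

theorem start_mem_verts : ∀ {a b : V} (w : G.Walk a b), a ∈ w.verts
  | _, _, .nil => List.mem_singleton_self _
  | _, _, .cons _ _ => List.mem_cons_self

theorem IsMConnecting.of_cons {a m b : V} {s : G.Step a m} {w : G.Walk m b}
    (h : (Walk.cons s w).IsMConnecting C) : w.IsMConnecting C := by
  cases w with
  | nil => trivial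
  | cons _ _ => exact h.2

theorem IsMConnecting.concat : ∀ {a b c : V} {w : G.Walk a b} (s : G.Step b c),
    w.IsMConnecting C → ((w.EndsWithArrow ∧ s.arrowAtStart) ↔ b ∈ C) →
    (w.concat s).IsMConnecting C
  | _, _, _, .nil, _, _, _ => trivial
  | _, _, _, .cons _ .nil, _, _, hb => ⟨hb, trivial⟩
  | _, _, _, .cons _ (.cons _ _), s, hw, hb => ⟨hw.1, IsMConnecting.concat s hw.2 hb⟩

/-- A walk leaving `m` with a tail is directed out of `m` up to its end or its first collider. -/
theorem mem_an_of_isMConnecting_of_not_arrowAtStart :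
    ∀ {c b : V} (w : G.Walk c b) {m : V} (t : G.Step m c), ¬ t.arrowAtStart →
      (Walk.cons t w).IsMConnecting C → m ∈ G.an (insert b C)
  | _, _, .nil, _, t, ht, _ =>
      mem_an_of_dir (Step.dir_of_not_arrowAtStart ht) (subset_an _ (Set.mem_insert _ _))
  | c, _, .cons u w, _, t, ht, hw => by
    have hmc := Step.dir_of_not_arrowAtStart ht
    by_cases hc : c ∈ C
    · exact mem_an_of_dir hmc (subset_an _ (Set.mem_insert_of_mem _ hc))
    · have hu : ¬ u.arrowAtStart := fun hu =>
        hc (hw.1.mp ⟨Step.arrowAtEnd_of_not_arrowAtStart ht, hu⟩)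
      exact mem_an_of_dir hmc (mem_an_of_isMConnecting_of_not_arrowAtStart w u hu hw.2)

theorem IsMConnecting.verts_subset_an : ∀ {a b : V} {w : G.Walk a b}, w.IsMConnecting C →
    ∀ v ∈ w.verts, v ∈ G.an (insert a (insert b C))
  | a, _, .nil, _, v, hv => by
    rw [List.mem_singleton.mp hv]
    exact subset_an _ (Set.mem_insert _ _)
  | x, b, .cons (b := m) s w, hw, v, hv => by
    rcases List.mem_cons.mp hv with rfl | hv
    · exact subset_an _ (Set.mem_insert _ _)
    have hm : m ∈ G.an (insert x (insert b C)) := by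
      by_cases hs : s.arrowAtEnd
      · cases w with
        | nil => exact subset_an _ (Set.mem_insert_of_mem _ (Set.mem_insert _ _))
        | cons t w =>
          by_cases hmC : m ∈ C
          · exact subset_an _ (Set.mem_insert_of_mem _ (Set.mem_insert_of_mem _ hmC))
          · have ht : ¬ t.arrowAtStart := fun ht => hmC (hw.1.mp ⟨hs, ht⟩)
            exact an_mono (Set.subset_insert _ _)
              (mem_an_of_isMConnecting_of_not_arrowAtStart w t ht hw.2)
      · exact mem_an_of_dir (Step.dir_of_not_arrowAtEnd hs) (subset_an _ (Set.mem_insert _ _))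
    refine an_subset_of_subset_an ?_ (verts_subset_an hw.of_cons v hv)
    exact Set.insert_subset hm ((Set.subset_insert _ _).trans (subset_an _))

end Walk

section Reachability

variable {A B C : Set V}

def MReachable (G : MixedGraph V) (A C : Set V) (x : V) : Prop :=
  ∃ a ∈ A, ∃ w : G.Walk a x, w.IsMConnecting C

def MReachableHead (G : MixedGraph V) (A C : Set V) (x : V) : Prop :=
  ∃ a ∈ A, ∃ w : G.Walk a x, w.IsMConnecting C ∧ w.EndsWithArrow

def MReachableTail (G : MixedGraph V) (A C : Set V) (x : V) : Prop :=
  ∃ a ∈ A, ∃ w : G.Walk a x, w.IsMConnecting C ∧ ¬ w.EndsWithArrow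

/-- For `x ∈ an(A ∪ B ∪ C)` this lets an m-connecting walk from `A` to `x` be continued along
every step allowed at `x`: any step if `x ∉ C`, one with an arrowhead at `x` if `x ∈ C`
(see `MReachableOpen.exists_concat`). -/
def MReachableOpen (G : MixedGraph V) (A C : Set V) (x : V) : Prop :=
  MReachableHead G A C x ∨ (x ∉ C ∧ MReachable G A C x)

theorem MReachableOpen.mReachable {x : V} : MReachableOpen G A C x → MReachable G A C x
  | .inl ⟨a, ha, w, hw, _⟩ | .inr ⟨_, a, ha, w, hw⟩ => ⟨a, ha, w, hw⟩

theorem mReachableTail_of_dir_path (hsep : G.MSep A B C) {t : V} (ht : t ∈ A ∪ B ∪ C) {x : V}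
    (hxt : Relation.ReflTransGen G.dir x t) :
    x ∉ C → MReachable G A C x → MReachableTail G A C x := by
  induction hxt using Relation.ReflTransGen.head_induction_on with
  | refl =>
    rintro htC ⟨a, ha, w, hw⟩
    rcases ht with (htA | htB) | htC'
    · exact ⟨t, htA, .nil, trivial, id⟩
    · exact absurd hw (hsep a ha t htB w)
    · exact absurd htC' htC
  | @head x y hxy _ ih =>
    rintro hxC ⟨a, ha, w, hw⟩
    refine (em w.EndsWithArrow).elim (fun hl => ?_) fun hl => ⟨a, ha, w, hw, hl⟩
    have hwy := hw.concat (.fwd hxy) ⟨fun h => h.2.elim, fun h => (hxC h).elim⟩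
    have hly := (Walk.endsWithArrow_concat w (.fwd hxy)).mpr trivial
    by_cases hyC : y ∈ C
    · -- bounce back at the collider `y`
      exact ⟨a, ha, _, hwy.concat (.bwd hxy) ⟨fun _ => hyC, fun _ => ⟨hly, trivial⟩⟩,
        (Walk.endsWithArrow_concat _ _).mp⟩
    · obtain ⟨a', ha', w', hw', hnl⟩ := ih hyC ⟨a, ha, _, hwy⟩
      exact ⟨a', ha', _,
        hw'.concat (.bwd hxy) ⟨fun h => (hnl h.1).elim, fun h => (hyC h).elim⟩,
        (Walk.endsWithArrow_concat _ _).mp⟩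

theorem MReachableOpen.exists_concat (hsep : G.MSep A B C) {x y : V}
    (hxW : x ∈ G.an (A ∪ B ∪ C)) (hx : MReachableOpen G A C x) (s : G.Step x y)
    (hs : x ∈ C → s.arrowAtStart) :
    ∃ a ∈ A, ∃ w : G.Walk a y, w.IsMConnecting C ∧ (s.arrowAtEnd → w.EndsWithArrow) := by
  by_cases hxC : x ∈ C
  · obtain ⟨a, ha, w, hw, hl⟩ | ⟨hxC', -⟩ := hx
    · exact ⟨a, ha, w.concat s, hw.concat s ⟨fun _ => hxC, fun _ => ⟨hl, hs hxC⟩⟩,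
        (Walk.endsWithArrow_concat w s).mpr⟩
    · exact absurd hxC hxC'
  · obtain ⟨t, ht, hxt⟩ := hxW
    obtain ⟨a, ha, w, hw, hnl⟩ := mReachableTail_of_dir_path hsep ht hxt hxC hx.mReachable
    exact ⟨a, ha, w.concat s, hw.concat s ⟨fun h => (hnl h.1).elim, fun h => (hxC h).elim⟩,
      (Walk.endsWithArrow_concat w s).mpr⟩

theorem MReachableOpen.of_bi (hsep : G.MSep A B C) {x y : V} (hxW : x ∈ G.an (A ∪ B ∪ C))
    (hx : MReachableOpen G A C x) (h : G.bi x y) : MReachableOpen G A C y :=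
  let ⟨a, ha, w, hw, hl⟩ := hx.exists_concat hsep hxW (.bi h) fun _ => trivial
  .inl ⟨a, ha, w, hw, hl trivial⟩

theorem MReachableOpen.mReachable_of_dir (hsep : G.MSep A B C) {x y : V}
    (hxW : x ∈ G.an (A ∪ B ∪ C)) (hx : MReachableOpen G A C x) (h : G.dir y x) :
    MReachable G A C y :=
  let ⟨a, ha, w, hw, _⟩ := hx.exists_concat hsep hxW (.bwd h) fun _ => trivial
  ⟨a, ha, w, hw⟩

theorem mReachableOpen_of_dir (hsep : G.MSep A B C) {x y : V} (hxW : x ∈ G.an (A ∪ B ∪ C))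
    (hxC : x ∉ C) (hx : MReachable G A C x) (h : G.dir x y) : MReachableOpen G A C y :=
  let ⟨a, ha, w, hw, hl⟩ := MReachableOpen.exists_concat hsep hxW (.inr ⟨hxC, hx⟩) (.fwd h)
    fun hxC' => (hxC hxC').elim
  .inl ⟨a, ha, w, hw, hl trivial⟩

end Reachability

section Partition

variable {A B C : Set V}

theorem exists_disjoint_districts_of_mSep (hAC : Disjoint A C) (hBC : Disjoint B C)
    (hsep : G.MSep A B C) :
    ∃ Astar Bstar : Set V, Disjoint Astar Bstar ∧ A ⊆ Astar ∧ B ⊆ Bstar ∧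
      Astar ∪ Bstar ∪ C = G.an (A ∪ B ∪ C) ∧
      (G.induce (G.an (A ∪ B ∪ C))).district
          (Astar ∪ (G.induce (G.an (A ∪ B ∪ C))).ch Astar) ∩
        (G.induce (G.an (A ∪ B ∪ C))).district
          (Bstar ∪ (G.induce (G.an (A ∪ B ∪ C))).ch Bstar) = ∅ := by
  set W := G.an (A ∪ B ∪ C)
  set H := G.induce W
  set Astar := {x | x ∈ W ∧ x ∉ C ∧ MReachable G A C x}
  set Bstar := {x | x ∈ W ∧ x ∉ C ∧ ¬ MReachable G A C x}
  have hclosed : ∀ x y, H.bi x y → x ∈ {x | MReachableOpen G A C x} →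
      y ∈ {x | MReachableOpen G A C x} :=
    fun _ _ h hx => MReachableOpen.of_bi hsep h.2.1 hx h.1
  have hDA : H.district (Astar ∪ H.ch Astar) ⊆ {x | MReachableOpen G A C x} := by
    refine district_subset_of_forall_bi ?_ hclosed
    rintro x (⟨-, hxC, hx⟩ | ⟨y, ⟨hyW, hyC, hy⟩, hyx, -, -⟩)
    · exact .inr ⟨hxC, hx⟩
    · exact mReachableOpen_of_dir hsep hyW hyC hy hyx
  refine ⟨Astar, Bstar, Set.disjoint_left.mpr fun _ hA hB => hB.2.2 hA.2.2,
    fun a ha => ⟨subset_an _ (.inl (.inl ha)), hAC.notMem_of_mem_left ha, a, ha, .nil, trivial⟩,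
    fun b hb => ⟨subset_an _ (.inl (.inr hb)), hBC.notMem_of_mem_left hb,
      fun ⟨a, ha, w, hw⟩ => hsep a ha b hb w hw⟩, ?_, ?_⟩
  · ext x
    refine ⟨fun h => ?_, fun hx => ?_⟩
    · rcases h with (h | h) | h
      exacts [h.1, h.1, subset_an _ (.inr h)]
    · by_cases hxC : x ∈ C
      · exact .inr hxC
      by_cases hx' : MReachable G A C x
      exacts [.inl (.inl ⟨hx, hxC, hx'⟩), .inl (.inr ⟨hx, hxC, hx'⟩)]
  · refine Set.eq_empty_iff_forall_notMem.mpr fun z ⟨hzA, hzB⟩ => ?_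
    obtain ⟨t, ht, htz⟩ := exists_mem_district_singleton hzB
    have hOpen : MReachableOpen G A C t :=
      district_subset_of_forall_bi (Set.singleton_subset_iff.mpr (hDA hzA)) hclosed htz
    rcases ht with ⟨-, -, ht⟩ | ⟨u, ⟨-, -, hu⟩, hut, -, htW⟩
    · exact ht hOpen.mReachable
    · exact hu (hOpen.mReachable_of_dir hsep htW hut)

variable {W S T : Set V}

theorem mem_district_of_step (hdist : Disjoint ((G.induce W).district (S ∪ (G.induce W).ch S))
      ((G.induce W).district (T ∪ (G.induce W).ch T)))
    {x m : V} (s : G.Step x m) (hxW : x ∈ W) (hmW : m ∈ W)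
    (hx : x ∈ (G.induce W).district (S ∪ (G.induce W).ch S)) (hxS : x ∈ S ∨ s.arrowAtStart)
    (hm : m ∈ S ∨ m ∈ T ∨ s.arrowAtEnd) :
    m ∈ (G.induce W).district (S ∪ (G.induce W).ch S) := by
  cases s with
  | bi h =>
    obtain ⟨s₀, hs₀, hr⟩ := hx
    exact ⟨s₀, hs₀, hr.tail ⟨h, hxW, hmW⟩⟩
  | fwd h =>
    have hxS : x ∈ S := hxS.resolve_right id
    exact subset_district _ (.inr ⟨x, hxS, h, hxW, hmW⟩)
  | bwd h =>
    rcases hm with hmS | hmT | hm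
    · exact subset_district _ (.inl hmS)
    · exact (hdist.notMem_of_mem_left hx (subset_district _ (.inr ⟨m, hmT, h, hmW, hxW⟩))).elim
    · exact hm.elim

/-- The invariant along the walk: each vertex lies in the district of `S ∪ ch S`, and in `S`
unless the step leaving it has an arrowhead there. -/
theorem not_isMConnecting_of_disjoint_districts (hW : W ⊆ S ∪ T ∪ C)
    (hdist : Disjoint ((G.induce W).district (S ∪ (G.induce W).ch S))
      ((G.induce W).district (T ∪ (G.induce W).ch T))) {y : V} (hy : y ∈ T) :
    ∀ {x m : V} (s : G.Step x m) (w : G.Walk m y),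
      (Walk.cons s w).IsMConnecting C → (∀ v ∈ (Walk.cons s w).verts, v ∈ W) →
      x ∈ (G.induce W).district (S ∪ (G.induce W).ch S) → (x ∈ S ∨ s.arrowAtStart) →
      False
  | x, _, s, .nil, _, hverts, hx, hxS => by
    have hyD := mem_district_of_step hdist s (hverts x (by simp [Walk.verts]))
      (hverts y (by simp [Walk.verts])) hx hxS (.inr (.inl hy))
    exact hdist.notMem_of_mem_left hyD (subset_district _ (.inl hy))
  | x, m, s, .cons t w, hc, hverts, hx, hxS => by
    have hmW : m ∈ W := hverts m (List.mem_cons_of_mem _ (Walk.start_mem_verts _))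
    have hmC : m ∈ C → s.arrowAtEnd ∧ t.arrowAtStart := hc.1.mpr
    have hmST : m ∉ C → m ∈ S ∨ m ∈ T := fun hmC' => by
      rcases hW hmW with (h | h) | h
      exacts [.inl h, .inr h, (hmC' h).elim]
    have hm : m ∈ S ∨ m ∈ T ∨ s.arrowAtEnd := by
      by_cases h : m ∈ C
      · exact .inr (.inr (hmC h).1)
      · exact (hmST h).elim .inl (.inr ∘ .inl)
    have hmD := mem_district_of_step hdist s (hverts x List.mem_cons_self) hmW hx hxS hm
    refine not_isMConnecting_of_disjoint_districts hW hdist hy t w hc.2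
      (fun v hv => hverts v (List.mem_cons_of_mem _ hv)) hmD ?_
    by_cases h : m ∈ C
    · exact .inr (hmC h).2
    · exact (hmST h).imp_right fun hmT =>
        (hdist.notMem_of_mem_left hmD (subset_district _ (.inl hmT))).elim

theorem mSep_of_disjoint_districts (hA : A ⊆ S) (hB : B ⊆ T)
    (hU : G.an (A ∪ B ∪ C) ⊆ S ∪ T ∪ C)
    (hdist : Disjoint ((G.induce (G.an (A ∪ B ∪ C))).district
        (S ∪ (G.induce (G.an (A ∪ B ∪ C))).ch S))
      ((G.induce (G.an (A ∪ B ∪ C))).district (T ∪ (G.induce (G.an (A ∪ B ∪ C))).ch T))) :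
    G.MSep A B C := by
  intro a ha b hb w hw
  cases w with
  | nil =>
    exact hdist.notMem_of_mem_left (subset_district _ (.inl (hA ha)))
      (subset_district _ (.inl (hB hb)))
  | cons s w =>
    refine not_isMConnecting_of_disjoint_districts hU hdist (hB hb) s w hw
      (fun v hv => an_mono ?_ (hw.verts_subset_an v hv))
      (subset_district _ (.inl (hA ha))) (.inl (hA ha))
    rintro u (rfl | rfl | hu)
    exacts [.inl (.inl ha), .inl (.inr hb), .inr hu]

end Partition

end MixedGraph

theorem stmt_7_general {V : Type*} (G : MixedGraph V) (A B C : Set V)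
    (hAC : Disjoint A C) (hBC : Disjoint B C) :
    G.MSep A B C ↔
      ∃ Astar Bstar : Set V, Disjoint Astar Bstar ∧ A ⊆ Astar ∧ B ⊆ Bstar ∧
        Astar ∪ Bstar ∪ C = G.an (A ∪ B ∪ C) ∧
        (G.induce (G.an (A ∪ B ∪ C))).district
            (Astar ∪ (G.induce (G.an (A ∪ B ∪ C))).ch Astar) ∩
          (G.induce (G.an (A ∪ B ∪ C))).district
            (Bstar ∪ (G.induce (G.an (A ∪ B ∪ C))).ch Bstar) = ∅ :=
  ⟨MixedGraph.exists_disjoint_districts_of_mSep hAC hBC,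
    fun ⟨_, _, _, hA, hB, hU, hdist⟩ =>
      MixedGraph.mSep_of_disjoint_districts hA hB hU.ge
        (Set.disjoint_iff_inter_eq_empty.mpr hdist)⟩

/-- `A ⊥_m B | C` in `G` iff there exist disjoint `A* ⊇ A`, `B* ⊇ B` with
`A* ∪ B* ∪ C = an(A∪B∪C)` and disjoint districts (computed in the induced subgraph
`G* = G_{an(A∪B∪C)}`) of `A* ∪ ch(A*)` and `B* ∪ ch(B*)`. -/
theorem stmt_7 {V : Type*} (G : MixedGraph V) (A B C : Set V)
    (hAB : Disjoint A B) (hAC : Disjoint A C) (hBC : Disjoint B C) :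
    G.MSep A B C ↔
      ∃ Astar Bstar : Set V, Disjoint Astar Bstar ∧ A ⊆ Astar ∧ B ⊆ Bstar ∧
        Astar ∪ Bstar ∪ C = G.an (A ∪ B ∪ C) ∧
        (G.induce (G.an (A ∪ B ∪ C))).district
            (Astar ∪ (G.induce (G.an (A ∪ B ∪ C))).ch Astar) ∩
          (G.induce (G.an (A ∪ B ∪ C))).district
            (Bstar ∪ (G.induce (G.an (A ∪ B ∪ C))).ch Bstar) = ∅ :=
  stmt_7_general G A B C hAC hBC
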